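/- arXiv:1605.02840 — 5 statements merged into one kernel-verified Lean document; each statement's English description precedes it below -/
import Mathlib

section
/- A posteriori velocity error bound for saddle-point problems: under the stated assumptions, if e_v, ê_v ∈ V and e_p, ê_p ∈ Q satisfy the error-residual equations a(e_v,u) − b(u,e_p) = ⟨ê_v,u⟩_V for all u ∈ V and b(e_v,q) = ⟨ê_p,q⟩_Q for all q ∈ Q, then ‖e_v‖_V ≤ ‖ê_v‖_V/α + (1 + γ/α)·‖ê_p‖_Q/β. -/
/-!
Let `B* : Q → V` send `q` to the Riesz representative of `b(·, q)`. The inf-sup condition says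
`‖B* q‖ ≥ β ‖q‖`, so `(p, r) ↦ ⟪B* p, B* r⟫` is coercive on `Q`, and Lax–Milgram yields `p` with
`w := B* p` satisfying `b(w, ·) = ⟪ê_p, ·⟫` and `‖w‖ ≤ ‖ê_p‖ / β`. Then `e_v - w` lies in the kernel
of `b`, so testing the first error equation with it removes the pressure term, and coercivity gives
`‖e_v - w‖ ≤ (‖ê_v‖ + γ ‖w‖) / α`. The triangle inequality concludes.
-/

open scoped RealInnerProductSpace

theorem le_div_of_mul_mul_self_le_mul {α c x : ℝ} (hα : 0 < α) (hc : 0 ≤ c)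
    (h : α * x * x ≤ c * x) : x ≤ c / α := by
  rcases le_or_gt x 0 with hx | hx
  · exact hx.trans (div_nonneg hc hα.le)
  · rw [le_div_iff₀ hα, mul_comm]
    exact le_of_mul_le_mul_right h hx

section BoundedBelow

variable {V Q : Type*} [NormedAddCommGroup V] [InnerProductSpace ℝ V]
  [NormedAddCommGroup Q] [InnerProductSpace ℝ Q]

theorem isCoercive_bilinearComp_innerSL {T : Q →L[ℝ] V} {β : ℝ} (hβ : 0 < β)
    (hT : ∀ q, β * ‖q‖ ≤ ‖T q‖) : IsCoercive ((innerSL ℝ).bilinearComp T T) := by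
  refine ⟨β * β, mul_pos hβ hβ, fun q => ?_⟩
  calc β * β * ‖q‖ * ‖q‖ = (β * ‖q‖) * (β * ‖q‖) := by ring
    _ ≤ ‖T q‖ * ‖T q‖ := mul_self_le_mul_self (by positivity) (hT q)
    _ = (innerSL ℝ).bilinearComp T T q q := (real_inner_self_eq_norm_mul_norm _).symm

theorem exists_inner_apply_eq_inner_of_bounded_below [CompleteSpace Q] {T : Q →L[ℝ] V} {β : ℝ}
    (hβ : 0 < β) (hT : ∀ q, β * ‖q‖ ≤ ‖T q‖) (g : Q) :
    ∃ p : Q, (∀ r, ⟪T p, T r⟫ = ⟪g, r⟫) ∧ ‖T p‖ ≤ ‖g‖ / β := by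
  have hB := isCoercive_bilinearComp_innerSL hβ hT
  set p := hB.continuousLinearEquivOfBilin.symm g
  have hp (r : Q) : ⟪T p, T r⟫ = ⟪g, r⟫ := by
    have h := hB.continuousLinearEquivOfBilin_apply p r
    rw [ContinuousLinearEquiv.apply_symm_apply] at h
    exact h.symm
  refine ⟨p, hp, le_div_of_mul_mul_self_le_mul hβ (norm_nonneg g) ?_⟩
  calc β * ‖T p‖ * ‖T p‖ = β * ⟪g, p⟫ := by
        rw [mul_assoc, ← real_inner_self_eq_norm_mul_norm, hp]
    _ ≤ β * (‖g‖ * ‖p‖) := by gcongr; exact real_inner_le_norm g p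
    _ = ‖g‖ * (β * ‖p‖) := by ring
    _ ≤ ‖g‖ * ‖T p‖ := by gcongr; exact hT p

end BoundedBelow

section InfSup

variable {V Q : Type*} [NormedAddCommGroup V] [InnerProductSpace ℝ V] [CompleteSpace V]
  [NormedAddCommGroup Q] [InnerProductSpace ℝ Q]

noncomputable def rieszRepr (b : V →L[ℝ] Q →L[ℝ] ℝ) : Q →L[ℝ] V :=
  (InnerProductSpace.toDual ℝ V).symm.toContinuousLinearEquiv.toContinuousLinearMap ∘L b.flip

theorem inner_rieszRepr (b : V →L[ℝ] Q →L[ℝ] ℝ) (q : Q) (u : V) :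
    ⟪rieszRepr b q, u⟫ = b u q :=
  InnerProductSpace.toDual_symm_apply

theorem mul_norm_le_norm_rieszRepr {b : V →L[ℝ] Q →L[ℝ] ℝ} {β : ℝ} {q : Q}
    (hq : β * ‖q‖ ≤ sSup {r : ℝ | ∃ u : V, u ≠ 0 ∧ r = b u q / ‖u‖}) :
    β * ‖q‖ ≤ ‖rieszRepr b q‖ := by
  refine hq.trans (Real.sSup_le ?_ (norm_nonneg _))
  rintro r ⟨u, hu, rfl⟩
  rw [div_le_iff₀ (norm_pos_iff.mpr hu), ← inner_rieszRepr]
  exact real_inner_le_norm _ _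

theorem exists_apply_eq_inner_of_infSup [CompleteSpace Q] (b : V →L[ℝ] Q →L[ℝ] ℝ) {β : ℝ}
    (hβ : 0 < β) (hb : ∀ q : Q, β * ‖q‖ ≤ sSup {r : ℝ | ∃ u : V, u ≠ 0 ∧ r = b u q / ‖u‖})
    (g : Q) : ∃ w : V, (∀ q, b w q = ⟪g, q⟫) ∧ ‖w‖ ≤ ‖g‖ / β := by
  obtain ⟨p, hp, hnorm⟩ := exists_inner_apply_eq_inner_of_bounded_below hβ
    (fun q => mul_norm_le_norm_rieszRepr (hb q)) g
  refine ⟨rieszRepr b p, fun q => ?_, hnorm⟩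
  rw [← inner_rieszRepr, real_inner_comm, hp]

end InfSup

section Coercive

variable {V : Type*} [NormedAddCommGroup V] [InnerProductSpace ℝ V]
  {a : V →ₗ[ℝ] V →ₗ[ℝ] ℝ} {γ α : ℝ}

theorem nonneg_of_abs_apply_le (ha : ∀ u v : V, |a u v| ≤ γ * ‖u‖ * ‖v‖) {u : V} (hu : u ≠ 0) :
    0 ≤ γ := by
  have hu' : 0 < ‖u‖ * ‖u‖ := by positivity
  have := (abs_nonneg _).trans (ha u u)
  rw [mul_assoc] at this
  exact nonneg_of_mul_nonneg_left this hu'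

theorem norm_sub_le_of_coercive (ha_bdd : ∀ u v : V, |a u v| ≤ γ * ‖u‖ * ‖v‖) (hγ : 0 ≤ γ)
    (hα : 0 < α) (ha_coer : ∀ u : V, α * ‖u‖ ^ 2 ≤ a u u) {v w f : V}
    (h : a v (v - w) = ⟪f, v - w⟫) : ‖v - w‖ ≤ (‖f‖ + γ * ‖w‖) / α := by
  refine le_div_of_mul_mul_self_le_mul hα (by positivity) ?_
  calc α * ‖v - w‖ * ‖v - w‖ = α * ‖v - w‖ ^ 2 := by ring
    _ ≤ a (v - w) (v - w) := ha_coer _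
    _ = ⟪f, v - w⟫ - a w (v - w) := by rw [LinearMap.map_sub₂, h]
    _ ≤ ‖f‖ * ‖v - w‖ + γ * ‖w‖ * ‖v - w‖ := by
        linarith [real_inner_le_norm f (v - w), neg_le_abs (a w (v - w)), ha_bdd w (v - w)]
    _ = (‖f‖ + γ * ‖w‖) * ‖v - w‖ := by ring

end Coercive

/-- A posteriori velocity error bound for saddle-point problems. -/
theorem velocity_error_bound
    {V Q : Type*}
    [NormedAddCommGroup V] [InnerProductSpace ℝ V] [CompleteSpace V]
    [NormedAddCommGroup Q] [InnerProductSpace ℝ Q] [CompleteSpace Q]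
    (a : V →ₗ[ℝ] V →ₗ[ℝ] ℝ) (b : V →ₗ[ℝ] Q →ₗ[ℝ] ℝ)
    (γ α γb β : ℝ)
    (ha_bdd : ∀ u v : V, |a u v| ≤ γ * ‖u‖ * ‖v‖)
    (hα : 0 < α)
    (ha_coer : ∀ u : V, α * ‖u‖ ^ 2 ≤ a u u)
    (hb_bdd : ∀ (u : V) (q : Q), |b u q| ≤ γb * ‖u‖ * ‖q‖)
    (hβ : 0 < β)
    (hb_infsup : ∀ q : Q, β * ‖q‖ ≤ sSup {r : ℝ | ∃ u : V, u ≠ 0 ∧ r = b u q / ‖u‖})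
    (ev ehat_v : V) (ep ehat_p : Q)
    (h1 : ∀ u : V, a ev u - b u ep = ⟪ehat_v, u⟫)
    (h2 : ∀ q : Q, b ev q = ⟪ehat_p, q⟫) :
    ‖ev‖ ≤ ‖ehat_v‖ / α + (1 + γ / α) * (‖ehat_p‖ / β) := by
  -- on `V = 0` nothing forces `γ ≥ 0`
  rcases subsingleton_or_nontrivial V with hV | hV
  · have hp : ehat_p = 0 := by simpa [Subsingleton.elim ev 0, eq_comm] using h2 ehat_p
    simp [Subsingleton.elim ev 0, Subsingleton.elim ehat_v 0, hp]
  obtain ⟨u, hu⟩ := exists_ne (0 : V)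
  have hγ : 0 ≤ γ := nonneg_of_abs_apply_le ha_bdd hu
  obtain ⟨w, hbw, hw⟩ := exists_apply_eq_inner_of_infSup
    (b.mkContinuous₂ γb fun u q => by simpa using hb_bdd u q) hβ hb_infsup ehat_p
  have hker (q : Q) : b (ev - w) q = 0 := by
    simp only [map_sub, LinearMap.sub_apply, h2, sub_eq_zero]
    exact (hbw q).symm
  have hz : ‖ev - w‖ ≤ (‖ehat_v‖ + γ * ‖w‖) / α :=
    norm_sub_le_of_coercive ha_bdd hγ hα ha_coer (by simpa only [hker, sub_zero] using h1 (ev - w))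
  calc ‖ev‖ ≤ ‖ev - w‖ + ‖w‖ := norm_le_norm_sub_add ev w
    _ ≤ (‖ehat_v‖ + γ * ‖w‖) / α + ‖w‖ := by gcongr
    _ = ‖ehat_v‖ / α + (1 + γ / α) * ‖w‖ := by field_simp; ring
    _ ≤ ‖ehat_v‖ / α + (1 + γ / α) * (‖ehat_p‖ / β) := by gcongr
end

section
/- A posteriori pressure error bound for saddle-point problems: under the stated assumptions, if e_v, ê_v ∈ V and e_p, ê_p ∈ Q satisfy the error-residual equations a(e_v,u) − b(u,e_p) = ⟨ê_v,u⟩_V for all u ∈ V and b(e_v,q) = ⟨ê_p,q⟩_Q for all q ∈ Q, then ‖e_p‖_Q ≤ Δ^p, where Δ^v := ‖ê_v‖_V/α + (1 + γ/α)·‖ê_p‖_Q/β and Δ^p := ‖ê_v‖_V/β + (γ/β)·Δ^v. -/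
/-!
Testing the first error equation with `u = e_v` and the second with `q = e_p` gives the energy
estimate `α ‖e_v‖² ≤ ‖ê_v‖ ‖e_v‖ + ‖ê_p‖ ‖e_p‖`, while the inf-sup condition applied to `e_p`,
with `b(u, e_p) = a(e_v, u) - ⟪ê_v, u⟫`, gives `β ‖e_p‖ ≤ γ ‖e_v‖ + ‖ê_v‖`. Eliminating `‖e_p‖`
bounds `‖e_v‖` by `Δ^v`, and substituting back bounds `‖e_p‖` by `Δ^p`.
-/

open scoped RealInnerProductSpace

/-- The junk value `sSup ∅ = 0` is why `C` must be nonnegative. -/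
lemma sSup_div_norm_le {V : Type*} [NormedAddCommGroup V] {f : V → ℝ} {C : ℝ} (hC : 0 ≤ C)
    (hf : ∀ u, f u ≤ C * ‖u‖) : sSup {r : ℝ | ∃ u : V, u ≠ 0 ∧ r = f u / ‖u‖} ≤ C := by
  refine Real.sSup_le ?_ hC
  rintro r ⟨u, hu, rfl⟩
  exact (div_le_iff₀ (norm_pos_iff.mpr hu)).mpr (hf u)

lemma coercivity_le_continuity {V : Type*} [NormedAddCommGroup V] [Nontrivial V]
    {a : V → V → ℝ} {γ α : ℝ} (ha_bdd : ∀ u v, |a u v| ≤ γ * ‖u‖ * ‖v‖)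
    (ha_coer : ∀ u, α * ‖u‖ ^ 2 ≤ a u u) : α ≤ γ := by
  obtain ⟨u, hu⟩ := exists_ne (0 : V)
  have hu_sq : 0 < ‖u‖ ^ 2 := by positivity
  have hle : α * ‖u‖ ^ 2 ≤ γ * ‖u‖ ^ 2 :=
    calc α * ‖u‖ ^ 2 ≤ a u u := ha_coer u
      _ ≤ |a u u| := le_abs_self _
      _ ≤ γ * ‖u‖ ^ 2 := by simpa only [mul_assoc, sq] using ha_bdd u u
  exact le_of_mul_le_mul_right hle hu_sq

lemma le_of_mul_sq_le_of_mul_le {x y A P α β γ : ℝ} (hα : 0 < α) (hβ : 0 < β) (hγ : 0 ≤ γ)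
    (hA : 0 ≤ A) (hP : 0 ≤ P)
    (henergy : α * x ^ 2 ≤ A * x + P * y) (hy : β * y ≤ γ * x + A) :
    x ≤ A / α + (1 + γ / α) * (P / β) := by
  have htail : 0 ≤ (1 + γ / α) * (P / β) := by positivity
  rcases le_or_gt x (A / α) with hsmall | hlarge
  · linarith
  have hαx : A < α * x := (div_lt_iff₀' hα).mp hlarge
  have hxpos : 0 < x := lt_of_le_of_lt (by positivity) hlarge
  -- dividing the energy estimate by `x` and using `A / x < α`
  have hkey : β * (α * x - A) ≤ P * (γ + α) := by
    have hPy : β * (α * x - A) * x ≤ P * (γ * x + A) := by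
      nlinarith [mul_le_mul_of_nonneg_left hy hP]
    have hPA : P * A ≤ P * (α * x) := mul_le_mul_of_nonneg_left hαx.le hP
    exact le_of_mul_le_mul_right (by linarith) hxpos
  have hscaled : α * (A / α + (1 + γ / α) * (P / β)) = A + P * (γ + α) / β := by
    field_simp
    ring
  refine le_of_mul_le_mul_left ?_ hα
  rw [hscaled]
  linarith [(le_div_iff₀' hβ).mpr hkey]

lemma eq_zero_of_infSup_of_subsingleton {V Q : Type*} [NormedAddCommGroup V] [Module ℝ V]
    [Subsingleton V] [NormedAddCommGroup Q] [Module ℝ Q] (b : V →ₗ[ℝ] Q →ₗ[ℝ] ℝ) {β : ℝ}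
    (hβ : 0 < β) {q : Q} (hinf : β * ‖q‖ ≤ sSup {r : ℝ | ∃ u : V, u ≠ 0 ∧ r = b u q / ‖u‖}) :
    q = 0 := by
  have hsup := sSup_div_norm_le (f := fun u : V => b u q) le_rfl fun u => by
    simp [Subsingleton.elim u 0]
  exact norm_le_zero_iff.mp (nonpos_of_mul_nonpos_right (hinf.trans hsup) hβ)

lemma mul_norm_sq_le_of_coercive {V Q : Type*} [NormedAddCommGroup V] [InnerProductSpace ℝ V]
    [NormedAddCommGroup Q] [InnerProductSpace ℝ Q] {a : V →ₗ[ℝ] V →ₗ[ℝ] ℝ}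
    {b : V →ₗ[ℝ] Q →ₗ[ℝ] ℝ} {α : ℝ} (ha_coer : ∀ u : V, α * ‖u‖ ^ 2 ≤ a u u)
    {ev ehat_v : V} {ep ehat_p : Q} (h1 : ∀ u : V, a ev u - b u ep = ⟪ehat_v, u⟫)
    (h2 : ∀ q : Q, b ev q = ⟪ehat_p, q⟫) :
    α * ‖ev‖ ^ 2 ≤ ‖ehat_v‖ * ‖ev‖ + ‖ehat_p‖ * ‖ep‖ :=
  calc α * ‖ev‖ ^ 2 ≤ a ev ev := ha_coer ev
    _ = ⟪ehat_v, ev⟫ + ⟪ehat_p, ep⟫ := by linarith [h1 ev, h2 ep]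
    _ ≤ ‖ehat_v‖ * ‖ev‖ + ‖ehat_p‖ * ‖ep‖ :=
      add_le_add (real_inner_le_norm _ _) (real_inner_le_norm _ _)

lemma mul_norm_le_of_infSup {V Q : Type*} [NormedAddCommGroup V] [InnerProductSpace ℝ V]
    [NormedAddCommGroup Q] [Module ℝ Q] {a : V →ₗ[ℝ] V →ₗ[ℝ] ℝ} {b : V →ₗ[ℝ] Q →ₗ[ℝ] ℝ}
    {γ β : ℝ} (ha_bdd : ∀ u v : V, |a u v| ≤ γ * ‖u‖ * ‖v‖) {ev ehat_v : V} {ep : Q}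
    (hinf : β * ‖ep‖ ≤ sSup {r : ℝ | ∃ u : V, u ≠ 0 ∧ r = b u ep / ‖u‖})
    (hC : 0 ≤ γ * ‖ev‖ + ‖ehat_v‖) (h1 : ∀ u : V, a ev u - b u ep = ⟪ehat_v, u⟫) :
    β * ‖ep‖ ≤ γ * ‖ev‖ + ‖ehat_v‖ := by
  refine hinf.trans (sSup_div_norm_le hC fun u => ?_)
  have ha := (abs_le.mp (ha_bdd ev u)).2
  have hinner := neg_le_of_abs_le (abs_real_inner_le_norm ehat_v u)
  linarith [h1 u]

theorem pressure_error_bound_general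
    {V Q : Type*}
    [NormedAddCommGroup V] [InnerProductSpace ℝ V]
    [NormedAddCommGroup Q] [InnerProductSpace ℝ Q]
    (a : V →ₗ[ℝ] V →ₗ[ℝ] ℝ) (b : V →ₗ[ℝ] Q →ₗ[ℝ] ℝ)
    (γ α β : ℝ)
    (ha_bdd : ∀ u v : V, |a u v| ≤ γ * ‖u‖ * ‖v‖)
    (hα : 0 < α)
    (ha_coer : ∀ u : V, α * ‖u‖ ^ 2 ≤ a u u)
    (hβ : 0 < β)
    (hb_infsup : ∀ q : Q, β * ‖q‖ ≤ sSup {r : ℝ | ∃ u : V, u ≠ 0 ∧ r = b u q / ‖u‖})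
    (ev ehat_v : V) (ep ehat_p : Q)
    (h1 : ∀ u : V, a ev u - b u ep = ⟪ehat_v, u⟫)
    (h2 : ∀ q : Q, b ev q = ⟪ehat_p, q⟫)
    (Δv Δp : ℝ)
    (hΔv : Δv = ‖ehat_v‖ / α + (1 + γ / α) * (‖ehat_p‖ / β))
    (hΔp : Δp = ‖ehat_v‖ / β + (γ / β) * Δv) :
    ‖ep‖ ≤ Δp := by
  rcases subsingleton_or_nontrivial V with hV | hV
  · have hQ (q : Q) : q = 0 := eq_zero_of_infSup_of_subsingleton b hβ (hb_infsup q)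
    simp [hΔp, hΔv, hQ ep, hQ ehat_p, Subsingleton.elim ehat_v 0]
  have hγ : 0 ≤ γ := hα.le.trans (coercivity_le_continuity ha_bdd ha_coer)
  have hp : β * ‖ep‖ ≤ γ * ‖ev‖ + ‖ehat_v‖ :=
    mul_norm_le_of_infSup ha_bdd (hb_infsup ep) (by positivity) h1
  have hv : ‖ev‖ ≤ Δv := hΔv ▸ le_of_mul_sq_le_of_mul_le hα hβ hγ (norm_nonneg _)
    (norm_nonneg _) (mul_norm_sq_le_of_coercive ha_coer h1 h2) hp
  rw [hΔp, div_mul_eq_mul_div, ← add_div, le_div_iff₀' hβ]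
  linarith [mul_le_mul_of_nonneg_left hv hγ]

/-- A posteriori pressure error bound for saddle-point problems. -/
theorem pressure_error_bound
    {V Q : Type*}
    [NormedAddCommGroup V] [InnerProductSpace ℝ V] [CompleteSpace V]
    [NormedAddCommGroup Q] [InnerProductSpace ℝ Q] [CompleteSpace Q]
    (a : V →ₗ[ℝ] V →ₗ[ℝ] ℝ) (b : V →ₗ[ℝ] Q →ₗ[ℝ] ℝ)
    (γ α γb β : ℝ)
    (ha_bdd : ∀ u v : V, |a u v| ≤ γ * ‖u‖ * ‖v‖)
    (hα : 0 < α)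
    (ha_coer : ∀ u : V, α * ‖u‖ ^ 2 ≤ a u u)
    (hb_bdd : ∀ (u : V) (q : Q), |b u q| ≤ γb * ‖u‖ * ‖q‖)
    (hβ : 0 < β)
    (hb_infsup : ∀ q : Q, β * ‖q‖ ≤ sSup {r : ℝ | ∃ u : V, u ≠ 0 ∧ r = b u q / ‖u‖})
    (ev ehat_v : V) (ep ehat_p : Q)
    (h1 : ∀ u : V, a ev u - b u ep = ⟪ehat_v, u⟫)
    (h2 : ∀ q : Q, b ev q = ⟪ehat_p, q⟫)
    (Δv Δp : ℝ)
    (hΔv : Δv = ‖ehat_v‖ / α + (1 + γ / α) * (‖ehat_p‖ / β))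
    (hΔp : Δp = ‖ehat_v‖ / β + (γ / β) * Δv) :
    ‖ep‖ ≤ Δp :=
  pressure_error_bound_general a b γ α β ha_bdd hα ha_coer hβ hb_infsup ev ehat_v ep ehat_p h1 h2 Δv
    Δp hΔv hΔp
end

section
/- Well-posedness of the saddle-point problem (Brezzi): under the stated assumptions, for every f ∈ V and g ∈ Q there exists a unique pair (v,p) ∈ V × Q such that a(v,u) − b(u,p) = ⟨f,u⟩_V for all u ∈ V and b(v,q) = ⟨g,q⟩_Q for all q ∈ Q. -/
open scoped RealInnerProductSpace
open InnerProductSpace ContinuousLinearMap Function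

/-! Via Riesz, `a` and `b` become operators `A : V → V` and `B : V → Q`, and the problem asks for
invertibility of the block operator `(v, p) ↦ (A v - B* p, B v)`. Injectivity is the energy
argument: testing the first equation with `v` gives `a(v, v) = b(v, p) = 0`, so `v = 0`, then
`B* p = 0` and `p = 0` by inf-sup. For surjectivity, eliminating `v = A⁻¹ (f + B* p)` leaves
`B A⁻¹ B* p = g - B A⁻¹ f`. This Schur complement is coercive: with `w = A⁻¹ B* p`,
`⟪B A⁻¹ B* p, p⟫ = a(w, w) ≥ α‖w‖²`, while `β‖p‖ ≤ ‖B* p‖ = ‖A w‖ ≤ ‖A‖‖w‖`; so Lax–Milgram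
solves it. -/

section

variable {V Q : Type*}
  [NormedAddCommGroup V] [InnerProductSpace ℝ V] [NormedAddCommGroup Q] [InnerProductSpace ℝ Q]

theorem LinearMap.exists_inner_apply_eq_of_bounded [CompleteSpace Q]
    (b : V →ₗ[ℝ] Q →ₗ[ℝ] ℝ) (C : ℝ) (hb : ∀ u q, |b u q| ≤ C * ‖u‖ * ‖q‖) :
    ∃ B : V →L[ℝ] Q, ∀ u q, ⟪B u, q⟫ = b u q :=
  ⟨(toDual ℝ Q).symm.toContinuousLinearEquiv.toContinuousLinearMap ∘L b.mkContinuous₂ C hb,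
    fun u q => by simp⟩

theorem IsCoercive.eq_zero_of_apply_self_nonpos {B : V →L[ℝ] V →L[ℝ] ℝ} (hB : IsCoercive B)
    {u : V} (hu : B u u ≤ 0) : u = 0 := by
  obtain ⟨C, hC, hB⟩ := hB
  have : ‖u‖ * ‖u‖ ≤ 0 :=
    nonpos_of_mul_nonpos_right (by simpa only [mul_assoc] using (hB u).trans hu) hC
  exact norm_eq_zero.mp (mul_self_eq_zero.mp (this.antisymm (mul_self_nonneg _)))

theorem continuousLinearMapOfBilin_innerSL_comp [CompleteSpace V] (T : V →L[ℝ] V) :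
    continuousLinearMapOfBilin (innerSL ℝ ∘L T) = T :=
  ext fun v => ext_inner_right ℝ fun w => continuousLinearMapOfBilin_apply _ v w

theorem IsCoercive.ker_eq_bot_of_innerSL_comp [CompleteSpace V] {T : V →L[ℝ] V}
    (hT : IsCoercive (innerSL ℝ ∘L T)) : T.ker = ⊥ := by
  simpa only [continuousLinearMapOfBilin_innerSL_comp] using hT.ker_eq_bot

theorem IsCoercive.range_eq_top_of_innerSL_comp [CompleteSpace V] {T : V →L[ℝ] V}
    (hT : IsCoercive (innerSL ℝ ∘L T)) : T.range = ⊤ := by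
  simpa only [continuousLinearMapOfBilin_innerSL_comp] using hT.range_eq_top

theorem sSup_inner_div_norm_le_norm_adjoint [CompleteSpace V] [CompleteSpace Q]
    (B : V →L[ℝ] Q) (q : Q) :
    sSup {r : ℝ | ∃ u : V, u ≠ 0 ∧ r = ⟪B u, q⟫ / ‖u‖} ≤ ‖adjoint B q‖ := by
  refine Real.sSup_le ?_ (norm_nonneg _)
  rintro r ⟨u, hu, rfl⟩
  rw [div_le_iff₀ (norm_pos_iff.mpr hu), ← adjoint_inner_right, mul_comm]
  exact real_inner_le_norm _ _

noncomputable def schurComplement [CompleteSpace V] [CompleteSpace Q] (A : V ≃L[ℝ] V)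
    (B : V →L[ℝ] Q) : Q →L[ℝ] Q :=
  B ∘L (A.symm : V →L[ℝ] V) ∘L adjoint B

theorem schurComplement_apply [CompleteSpace V] [CompleteSpace Q] (A : V ≃L[ℝ] V)
    (B : V →L[ℝ] Q) (p : Q) : schurComplement A B p = B (A.symm (adjoint B p)) :=
  rfl

theorem isCoercive_innerSL_comp_schurComplement [CompleteSpace V] [CompleteSpace Q]
    (A : V ≃L[ℝ] V) (hA : IsCoercive (innerSL ℝ ∘L (A : V →L[ℝ] V))) (B : V →L[ℝ] Q)
    {β : ℝ} (hβ : 0 < β) (hB : ∀ q, β * ‖q‖ ≤ ‖adjoint B q‖) :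
    IsCoercive (innerSL ℝ ∘L schurComplement A B) := by
  obtain ⟨α, hα, hA⟩ := hA
  -- `+ 1` keeps the constant positive when `V` is trivial.
  set K := ‖(A : V →L[ℝ] V)‖ + 1
  refine ⟨α * (β / K) ^ 2, by positivity, fun p => ?_⟩
  set w := A.symm (adjoint B p)
  have hw : A w = adjoint B p := A.apply_symm_apply _
  have hform : (innerSL ℝ ∘L schurComplement A B) p p = ⟪A w, w⟫ := by
    change ⟪B w, p⟫ = _
    rw [← adjoint_inner_right, ← hw, real_inner_comm]
  have hlower : β / K * ‖p‖ ≤ ‖w‖ := by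
    rw [div_mul_eq_mul_div, div_le_iff₀ (by positivity)]
    calc β * ‖p‖ ≤ ‖adjoint B p‖ := hB p
      _ = ‖(A : V →L[ℝ] V) w‖ := by rw [← hw]; rfl
      _ ≤ ‖(A : V →L[ℝ] V)‖ * ‖w‖ := le_opNorm _ _
      _ ≤ ‖w‖ * K := by nlinarith [norm_nonneg w]
  rw [hform]
  calc α * (β / K) ^ 2 * ‖p‖ * ‖p‖ = α * (β / K * ‖p‖) ^ 2 := by ring
    _ ≤ α * ‖w‖ ^ 2 := by gcongr
    _ = α * ‖w‖ * ‖w‖ := by ring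
    _ ≤ ⟪A w, w⟫ := hA w

section Saddle

variable [CompleteSpace V] [CompleteSpace Q]

noncomputable def saddleOperator (A : V →L[ℝ] V) (B : V →L[ℝ] Q) : V × Q →L[ℝ] V × Q :=
  (A ∘L fst ℝ V Q - adjoint B ∘L snd ℝ V Q).prod (B ∘L fst ℝ V Q)

theorem saddleOperator_apply (A : V →L[ℝ] V) (B : V →L[ℝ] Q) (vp : V × Q) :
    saddleOperator A B vp = (A vp.1 - adjoint B vp.2, B vp.1) :=
  rfl

theorem saddleOperator_eq_iff (A : V →L[ℝ] V) (B : V →L[ℝ] Q) (vp fg : V × Q) :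
    saddleOperator A B vp = fg ↔
      (∀ u, ⟪A vp.1, u⟫ - ⟪B u, vp.2⟫ = ⟪fg.1, u⟫) ∧ ∀ q, ⟪B vp.1, q⟫ = ⟪fg.2, q⟫ := by
  have hadj (u : V) : ⟪B u, vp.2⟫ = ⟪adjoint B vp.2, u⟫ := by
    rw [adjoint_inner_left, real_inner_comm]
  simp only [saddleOperator_apply, Prod.ext_iff, hadj, ← inner_sub_left]
  exact and_congr ⟨fun h u => h ▸ rfl, ext_inner_right ℝ⟩
    ⟨fun h q => h ▸ rfl, ext_inner_right ℝ⟩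

variable {A : V →L[ℝ] V} {B : V →L[ℝ] Q} {β : ℝ}

theorem saddleOperator_injective (hA : IsCoercive (innerSL ℝ ∘L A)) (hβ : 0 < β)
    (hB : ∀ q, β * ‖q‖ ≤ ‖adjoint B q‖) : Injective (saddleOperator A B) := by
  refine (injective_iff_map_eq_zero _).mpr fun ⟨v, p⟩ h => ?_
  obtain ⟨hAv, hBv⟩ : A v = adjoint B p ∧ B v = 0 := by
    simpa [saddleOperator_apply, sub_eq_zero] using h
  have hv : v = 0 := hA.eq_zero_of_apply_self_nonpos <| le_of_eq <| by
    change ⟪A v, v⟫ = 0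
    rw [hAv, real_inner_comm, adjoint_inner_right, hBv, inner_zero_left]
  have hp : p = 0 := by
    have : β * ‖p‖ ≤ 0 := by simpa [← hAv, hv] using hB p
    exact norm_le_zero_iff.mp (nonpos_of_mul_nonpos_right this hβ)
  simp [hv, hp]

theorem saddleOperator_surjective (hA : IsCoercive (innerSL ℝ ∘L A)) (hβ : 0 < β)
    (hB : ∀ q, β * ‖q‖ ≤ ‖adjoint B q‖) : Surjective (saddleOperator A B) := by
  rintro ⟨f, g⟩
  let Ae := ContinuousLinearEquiv.ofBijective A hA.ker_eq_bot_of_innerSL_comp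
    hA.range_eq_top_of_innerSL_comp
  obtain ⟨p, hp⟩ : ∃ p, schurComplement Ae B p = g - B (Ae.symm f) :=
    LinearMap.range_eq_top.mp
      (isCoercive_innerSL_comp_schurComplement Ae hA B hβ hB).range_eq_top_of_innerSL_comp _
  refine ⟨(Ae.symm (f + adjoint B p), p), Prod.ext ?_ ?_⟩
  · change A (Ae.symm (f + adjoint B p)) - adjoint B p = f
    rw [show A (Ae.symm _) = _ from Ae.apply_symm_apply _, add_sub_cancel_right]
  · change B (Ae.symm (f + adjoint B p)) = g
    rw [map_add, map_add, ← schurComplement_apply, hp, add_sub_cancel]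

theorem saddleOperator_bijective (hA : IsCoercive (innerSL ℝ ∘L A)) (hβ : 0 < β)
    (hB : ∀ q, β * ‖q‖ ≤ ‖adjoint B q‖) : Bijective (saddleOperator A B) :=
  ⟨saddleOperator_injective hA hβ hB, saddleOperator_surjective hA hβ hB⟩

end Saddle

end

/-- Well-posedness of the saddle-point problem (Brezzi). -/
theorem saddle_point_well_posedness
    {V Q : Type*}
    [NormedAddCommGroup V] [InnerProductSpace ℝ V] [CompleteSpace V]
    [NormedAddCommGroup Q] [InnerProductSpace ℝ Q] [CompleteSpace Q]
    (a : V →ₗ[ℝ] V →ₗ[ℝ] ℝ) (b : V →ₗ[ℝ] Q →ₗ[ℝ] ℝ)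
    (γ α γb β : ℝ)
    (ha_bdd : ∀ u v : V, |a u v| ≤ γ * ‖u‖ * ‖v‖)
    (hα : 0 < α)
    (ha_coer : ∀ u : V, α * ‖u‖ ^ 2 ≤ a u u)
    (hb_bdd : ∀ (u : V) (q : Q), |b u q| ≤ γb * ‖u‖ * ‖q‖)
    (hβ : 0 < β)
    (hb_infsup : ∀ q : Q, β * ‖q‖ ≤ sSup {r : ℝ | ∃ u : V, u ≠ 0 ∧ r = b u q / ‖u‖})
    (f : V) (g : Q) :
    ∃! vp : V × Q,
      (∀ u : V, a vp.1 u - b u vp.2 = ⟪f, u⟫) ∧ (∀ q : Q, b vp.1 q = ⟪g, q⟫) := by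
  obtain ⟨A, hA⟩ := a.exists_inner_apply_eq_of_bounded γ ha_bdd
  obtain ⟨B, hB⟩ := b.exists_inner_apply_eq_of_bounded γb hb_bdd
  have hA_coer : IsCoercive (innerSL ℝ ∘L A) :=
    ⟨α, hα, fun u => by rw [mul_assoc, ← sq]; exact (ha_coer u).trans_eq (hA u u).symm⟩
  have hB_infsup (q : Q) : β * ‖q‖ ≤ ‖adjoint B q‖ :=
    (hb_infsup q).trans (by simpa only [hB] using sSup_inner_div_norm_le_norm_adjoint B q)
  simpa only [saddleOperator_eq_iff, hA, hB] using
    (saddleOperator_bijective hA_coer hβ hB_infsup).existsUnique (f, g)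
end

section
/- Orthonormality of the method-of-snapshots spatial modes: under the stated assumptions, for all 1 ≤ k, l ≤ r one has ⟨g_k, g_l⟩_H = δ_{kl}, i.e., the family g_1, …, g_r is orthonormal in H. -/
open scoped RealInnerProductSpace

/-- Orthonormality of the method-of-snapshots spatial modes. -/
theorem snapshot_modes_orthonormal
    {H : Type*} [NormedAddCommGroup H] [InnerProductSpace ℝ H]
    {n r : ℕ}
    (u : Fin n → H)
    (C : Matrix (Fin n) (Fin n) ℝ)
    (hC : ∀ j m : Fin n, C j m = (1 / (n : ℝ)) * ⟪u j, u m⟫)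
    (lam : Fin r → ℝ) (e : Fin r → Fin n → ℝ)
    (hlam : ∀ k, 0 < lam k)
    (heig : ∀ k, C.mulVec (e k) = lam k • e k)
    (horth : ∀ k l : Fin r, ∑ j, e k j * e l j = if k = l then (1 : ℝ) else 0)
    (g : Fin r → H)
    (hg : ∀ k, g k = (1 / Real.sqrt (lam k * n)) • ∑ j, e k j • u j) :
    ∀ k l : Fin r, ⟪g k, g l⟫ = if k = l then (1 : ℝ) else 0 := by
  intro k l
  have hn : 0 < n := by
    rcases Nat.eq_zero_or_pos n with h | h
    · exfalso
      have := horth k k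
      subst h
      simp at this
    · exact h
  have hnR : (0:ℝ) < n := by exact_mod_cast hn
  have key : ∀ j, ∑ m, e l m * ⟪u j, u m⟫ = n * (lam l * e l j) := by
    intro j
    have h1 := congrFun (heig l) j
    simp [Matrix.mulVec, dotProduct] at h1
    calc ∑ m, e l m * ⟪u j, u m⟫ = n * ∑ m, C j m * e l m := by
          rw [Finset.mul_sum]
          refine Finset.sum_congr rfl fun m _ => ?_
          rw [hC]
          field_simp
          try ring
      _ = n * (lam l * e l j) := by rw [h1]
  have expand : ⟪g k, g l⟫ =
      (1 / Real.sqrt (lam k * n)) * ((1 / Real.sqrt (lam l * n)) *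
        ∑ j, e k j * (n * (lam l * e l j))) := by
    rw [hg, hg, real_inner_smul_left, real_inner_smul_right]
    congr 2
    rw [sum_inner]
    refine Finset.sum_congr rfl fun j _ => ?_
    rw [← key j, inner_sum, Finset.mul_sum]
    refine Finset.sum_congr rfl fun m _ => ?_
    rw [real_inner_smul_left, real_inner_smul_right]
    try ring
  have hsum : ∑ j, e k j * (n * (lam l * e l j))
      = (n * lam l) * (if k = l then (1:ℝ) else 0) := by
    rw [← horth k l, Finset.mul_sum]
    exact Finset.sum_congr rfl fun j _ => by ring
  rw [expand, hsum]
  by_cases hkl : k = l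
  · subst hkl
    simp only [if_pos rfl, if_true, mul_one]
    have hpos : 0 < lam k * n := mul_pos (hlam k) hnR
    have hs : Real.sqrt (lam k * n) * Real.sqrt (lam k * n) = lam k * n :=
      Real.mul_self_sqrt hpos.le
    have heq : 1 / Real.sqrt (lam k * n) * (1 / Real.sqrt (lam k * n) * (↑n * lam k))
        = (lam k * ↑n) / (Real.sqrt (lam k * n) * Real.sqrt (lam k * n)) := by ring
    rw [heq, hs, div_self hpos.ne']
  · simp [hkl]
end

section
/- Exact snapshot reconstruction by the method-of-snapshots expansion: under the stated assumptions, if additionally r = n, so that e_1, …, e_n form a full orthonormal eigenbasis of ℝ^n for C with all eigenvalues λ_1, …, λ_n > 0, then every snapshot is exactly reconstructed: u_j = Σ_{k=1}^n √(n λ_k)·(e_k)_j·g_k = Σ_{k=1}^n ⟨u_j, g_k⟩_H·g_k for every 1 ≤ j ≤ n. -/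
/-!
Write `v k := ∑ m, e k m • u m`, so that `g k = v k / √(n λ_k)`. Since `C` is `1/n` times the Gram
matrix of the snapshots, `⟪u j, v k⟫ = n (C e_k)_j = n λ_k (e_k)_j`, hence `⟪u j, g k⟫ = √(n λ_k) (e_k)_j`:
both expansions have the same coefficients. A square matrix with orthonormal rows also has orthonormal
columns, so `∑ k, (e_k)_j v k = ∑ m, (∑ k, (e_k)_j (e_k)_m) u m = u j`.
-/

open scoped RealInnerProductSpace

section Orthonormal

variable {R ι : Type*} [CommRing R] [Fintype ι] [DecidableEq ι]

theorem sum_mul_eq_ite_of_rows_orthonormal {e : ι → ι → R}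
    (h : ∀ k l, ∑ j, e k j * e l j = if k = l then 1 else 0) (p m : ι) :
    ∑ k, e k p * e k m = if p = m then 1 else 0 := by
  let E : Matrix ι ι R := Matrix.of e
  have hrows : E * E.transpose = 1 := by
    ext k l
    simpa [E, Matrix.mul_apply, Matrix.one_apply] using h k l
  have hcols : E.transpose * E = 1 := mul_eq_one_comm.mp hrows
  simpa [E, Matrix.mul_apply, Matrix.one_apply] using congrFun (congrFun hcols p) m

theorem sum_smul_sum_smul_of_rows_orthonormal {M : Type*} [AddCommGroup M] [Module R M]
    {e : ι → ι → R} (h : ∀ k l, ∑ j, e k j * e l j = if k = l then 1 else 0)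
    (u : ι → M) (j : ι) :
    ∑ k, e k j • ∑ m, e k m • u m = u j := by
  simp_rw [Finset.smul_sum, smul_smul]
  rw [Finset.sum_comm]
  simp_rw [← Finset.sum_smul, sum_mul_eq_ite_of_rows_orthonormal h j, ite_smul, one_smul, zero_smul]
  simp

end Orthonormal

theorem inner_sum_smul_eq_mulVec {H ι : Type*} [NormedAddCommGroup H] [InnerProductSpace ℝ H]
    [Fintype ι] {u : ι → H} {C : Matrix ι ι ℝ} {c : ℝ} (hc : c ≠ 0)
    (hC : ∀ j m, C j m = (1 / c) * ⟪u j, u m⟫) (v : ι → ℝ) (j : ι) :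
    ⟪u j, ∑ m, v m • u m⟫ = c * C.mulVec v j := by
  simp only [inner_sum, real_inner_smul_right, Matrix.mulVec, dotProduct, hC, Finset.mul_sum]
  congr 1 with m
  field_simp

theorem Real.one_div_sqrt_mul_mul (a x : ℝ) : 1 / √a * (a * x) = √a * x := by
  rw [← mul_assoc, one_div_mul_eq_div, Real.div_sqrt]

/-- Exact snapshot reconstruction by the method-of-snapshots expansion when a
full orthonormal eigenbasis (r = n) with positive eigenvalues is available. -/
theorem snapshot_exact_reconstruction
    {H : Type*} [NormedAddCommGroup H] [InnerProductSpace ℝ H]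
    {n : ℕ}
    (u : Fin n → H)
    (C : Matrix (Fin n) (Fin n) ℝ)
    (hC : ∀ j m : Fin n, C j m = (1 / (n : ℝ)) * ⟪u j, u m⟫)
    (lam : Fin n → ℝ) (e : Fin n → Fin n → ℝ)
    (hlam : ∀ k, 0 < lam k)
    (heig : ∀ k, C.mulVec (e k) = lam k • e k)
    (horth : ∀ k l : Fin n, ∑ j, e k j * e l j = if k = l then (1 : ℝ) else 0)
    (g : Fin n → H)
    (hg : ∀ k, g k = (1 / Real.sqrt (lam k * n)) • ∑ j, e k j • u j) :
    ∀ j : Fin n,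
      u j = ∑ k, (Real.sqrt ((n : ℝ) * lam k) * e k j) • g k ∧
      u j = ∑ k, ⟪u j, g k⟫ • g k := by
  intro j
  have hn : 0 < (n : ℝ) := by exact_mod_cast j.pos
  have hg' : ∀ k, g k = (1 / √(n * lam k)) • ∑ m, e k m • u m := fun k => by
    rw [hg k, mul_comm]
  have hsqrt : ∀ k, √(n * lam k) ≠ 0 := fun k => (Real.sqrt_pos.2 (mul_pos hn (hlam k))).ne'
  have hinner : ∀ k, ⟪u j, g k⟫ = √(n * lam k) * e k j := fun k => by
    rw [hg' k, real_inner_smul_right, inner_sum_smul_eq_mulVec hn.ne' hC, heig k, Pi.smul_apply,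
      smul_eq_mul, ← mul_assoc (n : ℝ), Real.one_div_sqrt_mul_mul]
  have hexpand : u j = ∑ k, (√(n * lam k) * e k j) • g k := by
    conv_lhs => rw [← sum_smul_sum_smul_of_rows_orthonormal horth u j]
    refine Finset.sum_congr rfl fun k _ => ?_
    rw [hg' k, smul_smul, mul_right_comm, mul_one_div_cancel (hsqrt k), one_mul]
  exact ⟨hexpand, by simpa only [hinner] using hexpand⟩
end
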